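/- Conversely to the torus-invariance lemma: if C = Σ_{l=0}^{m} C_l x^l z^{m−l} with each C_l ≠ 0 homogeneous of degree d in a₀,…,a_n, and C is invariant under the substitution a_i ↦ λ^{n−2i}a_i, x ↦ λx, z ↦ λ⁻¹z for all λ in an infinite field k, then each C_l is isobaric of weight w + l for some fixed integer w satisfying nd − 2w = m. -/

import Mathlib

/-!
The torus acts on a monomial `a^u x^l z^(m-l)` of `C` through the character
`λ ↦ λ^(l - (m - l) + Σ (n - 2i) u_i)`, so comparing coefficients, invariance makes this character
trivial for every monomial `a^u` of `C_l`. Over an infinite field `λ ↦ λ^E` is trivial on `kˣ` only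
for `E = 0`, and with `Σ u_i = d` this reads `nd + 2l = m + 2 Σ i u_i`. Hence the isobaric weight of
each monomial of `C_l` is `w + l`, where `w` is read off any monomial of `C_0`.
-/

open MvPolynomial

theorem Units.eq_zero_of_forall_zpow_eq_one {k : Type*} [Field k] [Infinite k] {E : ℤ}
    (h : ∀ lam : kˣ, lam ^ E = 1) : E = 0 := by
  by_contra hE
  have : NeZero E.natAbs := ⟨Int.natAbs_ne_zero.2 hE⟩
  have : Infinite {a : k // a ≠ 0} := (Set.finite_singleton (0 : k)).infinite_compl.to_subtype
  have : Infinite kˣ := Infinite.of_injective _ unitsEquivNeZero.symm.injective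
  have hroot (lam : kˣ) : lam ∈ rootsOfUnity E.natAbs k :=
    (mem_rootsOfUnity _ _).2 (pow_natAbs_eq_one.2 (h lam))
  have : Finite kˣ := Finite.of_injective (fun lam => (⟨lam, hroot lam⟩ : rootsOfUnity _ k))
    fun _ _ hab => congrArg Subtype.val hab
  exact not_finite kˣ

namespace Finsupp

theorem prod_zpow_pow_eq_zpow_weight {G ι : Type*} [CommGroup G] (g : G) (χ : ι → ℤ)
    (u : ι →₀ ℕ) : (u.prod fun i e => (g ^ χ i) ^ e) = g ^ weight χ u := by
  classical
  induction u using Finsupp.induction with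
  | zero => simp
  | single_add i e v _ _ ih =>
    rw [prod_add_index' (fun _ => pow_zero _) (fun _ _ _ => pow_add _ _ _),
      prod_single_index (h := fun i e => (g ^ χ i) ^ e) (pow_zero _), ih, map_add, weight_single,
      zpow_add, ← zpow_natCast, ← zpow_mul, nsmul_eq_mul, mul_comm (χ i)]

theorem weight_sub_two_mul {ι : Type*} [Fintype ι] (a : ℤ) (w : ι → ℕ) (u : ι →₀ ℕ) :
    weight (fun i => a - 2 * (w i : ℤ)) u
      = a * ((degree u : ℕ) : ℤ) - 2 * (∑ i, w i * u i : ℕ) := by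
  rw [weight_eq_sum, degree_eq_sum]
  push_cast
  rw [Finset.mul_sum, Finset.mul_sum, ← Finset.sum_sub_distrib]
  exact Finset.sum_congr rfl fun i _ => by rw [nsmul_eq_mul]; ring

end Finsupp

theorem Units.val_finsuppProd_zpow_pow {M ι : Type*} [CommMonoid M] (g : Mˣ) (χ : ι → ℤ)
    (u : ι →₀ ℕ) :
    (u.prod fun i e => ((g ^ χ i : Mˣ) : M) ^ e) = ((g ^ Finsupp.weight χ u : Mˣ) : M) := by
  rw [← Finsupp.prod_zpow_pow_eq_zpow_weight, ← Units.coeHom_apply, map_finsuppProd]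
  simp

namespace MvPolynomial

theorem coeff_eval₂Hom_C_comp_mul_X {ι R S : Type*} [CommSemiring R] [CommSemiring S]
    (f : R →+* S) (c : ι → S) (P : MvPolynomial ι R) (u : ι →₀ ℕ) :
    coeff u (eval₂Hom (C.comp f) (fun i => C (c i) * X i) P)
      = (u.prod fun i e => c i ^ e) * f (coeff u P) := by
  classical
  induction P using MvPolynomial.induction_on' with
  | monomial v a =>
    rw [coe_eval₂Hom, eval₂_monomial, coeff_monomial]
    simp only [RingHom.comp_apply, mul_pow, Finsupp.prod_mul, ← map_pow, ← map_finsuppProd]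
    rw [← mul_assoc, ← map_mul, ← monomial_eq, coeff_monomial]
    split_ifs with h
    · subst h; ring
    · simp
  | add P Q hP hQ => simp only [map_add, coeff_add, hP, hQ, mul_add]

theorem coeff_eval₂Hom_C_mul_X {ι R : Type*} [CommSemiring R] (c : ι → R)
    (P : MvPolynomial ι R) (u : ι →₀ ℕ) :
    coeff u (eval₂Hom C (fun i => C (c i) * X i) P) = (u.prod fun i e => c i ^ e) * coeff u P :=
  coeff_eval₂Hom_C_comp_mul_X (RingHom.id R) c P u

noncomputable def binaryForm {R : Type*} [CommSemiring R] (m : ℕ) (a : ℕ → R) :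
    MvPolynomial (Fin 2) R :=
  ∑ l ∈ Finset.range (m + 1), C (a l) * X 0 ^ l * X 1 ^ (m - l)

theorem coeff_binaryForm {R : Type*} [CommSemiring R] {m l : ℕ} (a : ℕ → R) (hl : l ≤ m) :
    coeff (Finsupp.single 0 l + Finsupp.single 1 (m - l)) (binaryForm m a) = a l := by
  classical
  have hterm (j : ℕ) : (C (a j) * X 0 ^ j * X 1 ^ (m - j) : MvPolynomial (Fin 2) R)
      = monomial (Finsupp.single 0 j + Finsupp.single 1 (m - j)) (a j) := by
    rw [X_pow_eq_monomial, X_pow_eq_monomial, C_mul_monomial, monomial_mul, mul_one, mul_one]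
  simp only [binaryForm, hterm, coeff_sum, coeff_monomial]
  rw [Finset.sum_eq_single l]
  · simp
  · intro j _ hjl
    rw [if_neg]
    intro h
    exact hjl (by simpa using congrArg (· 0) h)
  · intro h
    exact absurd (Finset.mem_range_succ_iff.2 hl) h

theorem zpow_eq_one_of_binaryForm_invariant {ι k : Type*} [CommRing k] [IsDomain k]
    (χ : ι → ℤ) (m : ℕ) (a : ℕ → MvPolynomial ι k) (g : kˣ)
    (h : eval₂Hom ((C : MvPolynomial ι k →+* _).comp
        (eval₂Hom (C : k →+* _) fun i => C ((g ^ χ i : kˣ) : k) * X i))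
      (fun j : Fin 2 => C (C ((g ^ ![(1 : ℤ), -1] j : kˣ) : k)) * X j) (binaryForm m a)
        = binaryForm m a)
    {l : ℕ} (hl : l ≤ m) {u : ι →₀ ℕ} (hu : u ∈ (a l).support) :
    g ^ ((l : ℤ) - (m - l : ℕ) + Finsupp.weight χ u) = 1 := by
  have hcoeff :=
    congrArg (fun P => coeff u (coeff (Finsupp.single 0 l + Finsupp.single 1 (m - l)) P)) h
  simp only [coeff_eval₂Hom_C_comp_mul_X, coeff_binaryForm _ hl, ← map_pow, ← map_finsuppProd,
    Units.val_finsuppProd_zpow_pow, coeff_C_mul, coeff_eval₂Hom_C_mul_X] at hcoeff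
  have hweight : Finsupp.weight ![(1 : ℤ), -1] (Finsupp.single 0 l + Finsupp.single 1 (m - l))
      = (l : ℤ) - (m - l : ℕ) := by
    rw [map_add, Finsupp.weight_single, Finsupp.weight_single]
    simp [sub_eq_add_neg]
  rw [hweight, ← mul_assoc, ← Units.val_mul, ← zpow_add] at hcoeff
  exact Units.val_eq_one.1 <|
    mul_left_cancel₀ (mem_support_iff.1 hu) (by rw [mul_comm, hcoeff, mul_one])

end MvPolynomial

/-- Torus invariance (Lemma 1, "only if" direction): over an infinite field, if
    C = Σ_{l=0}^m C_l x^l z^{m−l} with each C_l ≠ 0 homogeneous of degree d, and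
    C is invariant under aᵢ ↦ λ^{n−2i} aᵢ, x ↦ λx, z ↦ λ⁻¹z for all λ ∈ kˣ,
    then there is a fixed w with nd = m + 2w such that each C_l is isobaric of
    weight w + l. -/
theorem torus_invariance_converse {k : Type*} [Field k] [Infinite k]
    (n d m : ℕ) (Cl : ℕ → MvPolynomial (Fin (n + 1)) k)
    (hne : ∀ l ≤ m, Cl l ≠ 0)
    (hhom : ∀ l ≤ m, (Cl l).IsHomogeneous d)
    (hinv : ∀ lam : kˣ,
      (let R := MvPolynomial (Fin (n + 1)) k
       let S := MvPolynomial (Fin 2) R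
       let σ : R →+* R := eval₂Hom (C : k →+* R)
         (fun i : Fin (n + 1) =>
           C (((lam ^ ((n : ℤ) - 2 * (i : ℤ))) : kˣ) : k) * X i)
       let T : S →+* S := eval₂Hom ((C : R →+* S).comp σ)
         (fun j : Fin 2 =>
           if j = 0 then C (C ((lam : k))) * X 0
           else C (C (((lam⁻¹ : kˣ) : k))) * X 1)
       let Cpoly : S := ∑ l ∈ Finset.range (m + 1), C (Cl l) * (X 0) ^ l * (X 1) ^ (m - l)
       T Cpoly = Cpoly)) :
    ∃ w : ℕ, n * d = m + 2 * w ∧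
      ∀ l ≤ m, ∀ mo ∈ (Cl l).support,
        (∑ i : Fin (n + 1), (i : ℕ) * mo i) = w + l := by
  have hT (lam : kˣ) :
      (fun j : Fin 2 => if j = 0 then C (C (lam : k)) * X 0 else C (C ((lam⁻¹ : kˣ) : k)) * X 1 :
        Fin 2 → MvPolynomial (Fin 2) (MvPolynomial (Fin (n + 1)) k))
      = fun j => C (C ((lam ^ ![(1 : ℤ), -1] j : kˣ) : k)) * X j := by
    funext j; fin_cases j <;> simp
  have hexp : ∀ l ≤ m, ∀ mo ∈ (Cl l).support,
      (n * d + 2 * l : ℤ) = m + 2 * (∑ i : Fin (n + 1), (i : ℕ) * mo i : ℕ) := by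
    intro l hl mo hmo
    have hzero := Units.eq_zero_of_forall_zpow_eq_one fun lam =>
      zpow_eq_one_of_binaryForm_invariant _ m Cl lam
        (by simpa only [hT, binaryForm] using hinv lam) hl hmo
    have hdeg : mo.degree = d := by
      rw [Finsupp.degree_eq_weight_one]
      exact hhom l hl (mem_support_iff.1 hmo)
    rw [Finsupp.weight_sub_two_mul, hdeg] at hzero
    omega
  obtain ⟨mo₀, hmo₀⟩ := support_nonempty.2 (hne 0 m.zero_le)
  have h₀ := hexp 0 m.zero_le mo₀ hmo₀
  refine ⟨∑ i : Fin (n + 1), (i : ℕ) * mo₀ i, by omega, fun l hl mo hmo => ?_⟩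
  have := hexp l hl mo hmo
  omega
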